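/- arXiv:2401.08823 — 5 statements merged into one kernel-verified Lean document; each statement's English description precedes it below -/
import Mathlib

section
/- Let X₁ be a separable real Banach space and X₂ a real Banach space. Equip the space L_s(X₁,X₂) of bounded linear operators from X₁ to X₂ with the strong operator topology (the topology of pointwise convergence). Then the evaluation map (T,x) ↦ Tx from L_s(X₁,X₂) × X₁ to X₂ is measurable with respect to the product σ-algebra Borel(L_s(X₁,X₂)) ⊗ Borel(X₁) on the domain and the Borel σ-algebra of X₂ on the codomain. -/
open TopologicalSpace

/-- The strong operator topology on `X₁ →L[ℝ] X₂`: the coarsest topology making all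
evaluation maps `T ↦ T x` continuous. -/
def strongOperatorTopology (X₁ X₂ : Type*)
    [NormedAddCommGroup X₁] [NormedSpace ℝ X₁]
    [NormedAddCommGroup X₂] [NormedSpace ℝ X₂] :
    TopologicalSpace (X₁ →L[ℝ] X₂) :=
  ⨅ x : X₁, TopologicalSpace.induced (fun T : X₁ →L[ℝ] X₂ => T x) inferInstance

/-- The Borel σ-algebra of the strong operator topology on `X₁ →L[ℝ] X₂`. -/
def sotBorel (X₁ X₂ : Type*)
    [NormedAddCommGroup X₁] [NormedSpace ℝ X₁]
    [NormedAddCommGroup X₂] [NormedSpace ℝ X₂] :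
    MeasurableSpace (X₁ →L[ℝ] X₂) :=
  @borel _ (strongOperatorTopology X₁ X₂)

/-- for a separable Banach space `X₁` and a Banach space `X₂`, the evaluation
map `(T, x) ↦ T x` is measurable from `Borel(L_s(X₁,X₂)) ⊗ Borel(X₁)` to `Borel(X₂)`. -/
theorem stmt_1
    {X₁ : Type*} [NormedAddCommGroup X₁] [NormedSpace ℝ X₁] [CompleteSpace X₁]
    [SeparableSpace X₁]
    {X₂ : Type*} [NormedAddCommGroup X₂] [NormedSpace ℝ X₂] [CompleteSpace X₂] :
    @Measurable ((X₁ →L[ℝ] X₂) × X₁) X₂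
      (@MeasurableSpace.prod _ _ (sotBorel X₁ X₂) (borel X₁)) (borel X₂)
      (fun p => p.1 p.2) := by
  letI : MeasurableSpace X₁ := borel X₁
  haveI : BorelSpace X₁ := ⟨rfl⟩
  letI : MeasurableSpace X₂ := borel X₂
  haveI : BorelSpace X₂ := ⟨rfl⟩
  letI : TopologicalSpace (X₁ →L[ℝ] X₂) := strongOperatorTopology X₁ X₂
  letI : MeasurableSpace (X₁ →L[ℝ] X₂) := sotBorel X₁ X₂
  haveI : BorelSpace (X₁ →L[ℝ] X₂) := ⟨rfl⟩
  have key : Measurable (Function.uncurry fun (x : X₁) (T : X₁ →L[ℝ] X₂) => T x) := by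
    apply MeasureTheory.measurable_uncurry_of_continuous_of_measurable
    · exact fun T => T.continuous
    · intro x
      have hc : Continuous fun T : X₁ →L[ℝ] X₂ => T x :=
        continuous_iInf_dom (i := x) continuous_induced_dom
      exact hc.measurable
  exact key.comp measurable_swap
end

section
/- Let ω ∈ Ω, let t ≥ 1 be real, and let E ⊆ X₁ be a linear subspace. Suppose m > 0 and K > 0 satisfy ‖U^{(1)}_ω(t)v‖₁ ≥ m‖v‖₁ and ‖U^{(1)}_ω(t−1)v‖₁ ≤ K‖v‖₁ for all v ∈ E. Then for every nonzero u ∈ E, the vector u' := U^{(1,2)}_ω(t)u ∈ X₂ is nonzero and satisfies ‖iu'‖₁ / ‖u'‖₂ ≥ m / (‖U^{(1,2)}_{θ_{t−1}ω}(1)‖ · K). -/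
open Filter Topology

/-- lower bound for `‖i u'‖₁ / ‖u'‖₂` where `u' = U¹²_ω(t) u`,
for nonzero `u` in a subspace `E` on which `U¹_ω(t)` is bounded below by `m`
and `U¹_ω(t−1)` is bounded above by `K`. Here `U¹²_ω(t) := U¹²_{θ_{t−1}ω}(1) ∘ U¹_ω(t−1)`. -/
theorem stmt_5
    {X₁ : Type*} [NormedAddCommGroup X₁] [NormedSpace ℝ X₁]
    {X₂ : Type*} [NormedAddCommGroup X₂] [NormedSpace ℝ X₂]
    (i : X₂ →L[ℝ] X₁) (hi : Function.Injective i)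
    {Ω : Type*} (θ : ℝ → Ω → Ω)
    (hθ0 : ∀ ω, θ 0 ω = ω) (hθadd : ∀ t s ω, θ (t + s) ω = θ t (θ s ω))
    (U₁ : Ω → ℝ → (X₁ →L[ℝ] X₁)) (U₂ : Ω → ℝ → (X₂ →L[ℝ] X₂))
    (hU₁0 : ∀ ω, U₁ ω 0 = ContinuousLinearMap.id ℝ X₁)
    (hU₂0 : ∀ ω, U₂ ω 0 = ContinuousLinearMap.id ℝ X₂)
    (hU₁c : ∀ ω t s, 0 ≤ t → 0 ≤ s → (U₁ (θ s ω) t).comp (U₁ ω s) = U₁ ω (t + s))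
    (hU₂c : ∀ ω t s, 0 ≤ t → 0 ≤ s → (U₂ (θ s ω) t).comp (U₂ ω s) = U₂ ω (t + s))
    (hA2 : ∀ ω t, 0 ≤ t → (U₁ ω t).comp i = i.comp (U₂ ω t))
    (U₁₂ : Ω → (X₁ →L[ℝ] X₂))
    (hA3₁ : ∀ ω, U₁ ω 1 = i.comp (U₁₂ ω))
    (hA3₂ : ∀ ω, U₂ ω 1 = (U₁₂ ω).comp i)
    (ω : Ω) (t : ℝ) (ht : 1 ≤ t) (E : Submodule ℝ X₁)
    (m K : ℝ) (hm : 0 < m) (hK : 0 < K)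
    (hlow : ∀ v ∈ E, m * ‖v‖ ≤ ‖U₁ ω t v‖)
    (hup : ∀ v ∈ E, ‖U₁ ω (t - 1) v‖ ≤ K * ‖v‖)
    (u : X₁) (hu : u ∈ E) (hune : u ≠ 0) :
    U₁₂ (θ (t - 1) ω) (U₁ ω (t - 1) u) ≠ 0 ∧
      m / (‖U₁₂ (θ (t - 1) ω)‖ * K) ≤
        ‖i (U₁₂ (θ (t - 1) ω) (U₁ ω (t - 1) u))‖ / ‖U₁₂ (θ (t - 1) ω) (U₁ ω (t - 1) u)‖ := by

  set u' := U₁₂ (θ (t - 1) ω) (U₁ ω (t - 1) u) with hu'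
  have hiu' : i u' = U₁ ω t u := by
    have h1 : (U₁ (θ (t-1) ω) 1).comp (U₁ ω (t-1)) = U₁ ω t := by
      have := hU₁c ω 1 (t-1) zero_le_one (by linarith)
      simpa [add_sub_cancel] using this
    have h2 : U₁ (θ (t-1) ω) 1 = i.comp (U₁₂ (θ (t-1) ω)) := hA3₁ _
    calc i u' = (i.comp (U₁₂ (θ (t-1) ω))) (U₁ ω (t-1) u) := rfl
      _ = (U₁ (θ (t-1) ω) 1) (U₁ ω (t-1) u) := by rw [h2]
      _ = ((U₁ (θ (t-1) ω) 1).comp (U₁ ω (t-1))) u := rfl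
      _ = U₁ ω t u := by rw [h1]
  have hlb : m * ‖u‖ ≤ ‖i u'‖ := by rw [hiu']; exact hlow u hu
  have hupos : 0 < ‖u‖ := norm_pos_iff.mpr hune
  have hipos : 0 < ‖i u'‖ := lt_of_lt_of_le (by positivity) hlb
  have hune' : u' ≠ 0 := by
    intro h
    rw [h] at hipos
    simp at hipos
  refine ⟨hune', ?_⟩
  have hub : ‖u'‖ ≤ ‖U₁₂ (θ (t-1) ω)‖ * (K * ‖u‖) := by
    calc ‖u'‖ ≤ ‖U₁₂ (θ (t-1) ω)‖ * ‖U₁ ω (t-1) u‖ :=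
          (U₁₂ (θ (t-1) ω)).le_opNorm _
      _ ≤ ‖U₁₂ (θ (t-1) ω)‖ * (K * ‖u‖) := by
          exact mul_le_mul_of_nonneg_left (hup u hu) (norm_nonneg _)
  have hNpos : 0 < ‖U₁₂ (θ (t-1) ω)‖ := by
    by_contra h
    push_neg at h
    have : ‖U₁₂ (θ (t-1) ω)‖ = 0 := le_antisymm h (norm_nonneg _)
    have : ‖u'‖ ≤ 0 := by
      calc ‖u'‖ ≤ ‖U₁₂ (θ (t-1) ω)‖ * ‖U₁ ω (t-1) u‖ := (U₁₂ (θ (t-1) ω)).le_opNorm _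
        _ = 0 := by rw [this]; ring
    exact hune' (norm_le_zero_iff.mp this)
  have hu'pos : 0 < ‖u'‖ := norm_pos_iff.mpr hune'
  rw [div_le_div_iff₀ (by positivity) hu'pos]
  calc m * ‖u'‖ ≤ m * (‖U₁₂ (θ (t-1) ω)‖ * (K * ‖u‖)) :=
        mul_le_mul_of_nonneg_left hub hm.le
    _ = ‖U₁₂ (θ (t-1) ω)‖ * K * (m * ‖u‖) := by ring
    _ ≤ ‖U₁₂ (θ (t-1) ω)‖ * K * ‖i u'‖ :=
        mul_le_mul_of_nonneg_left hlb (by positivity)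
    _ = ‖i u'‖ * (‖U₁₂ (θ (t-1) ω)‖ * K) := by ring
end

section
/- Let ω ∈ Ω, let u ∈ X₂ be nonzero and let λ ∈ ℝ. If lim_{t→∞} (1/t) ln‖U^{(1)}_ω(t)(iu)‖₁ = λ, then lim_{t→∞} (1/t) ln‖U^{(2)}_ω(t)u‖₂ = λ. -/
open Filter Topology

/-! With `a t = ‖U¹_ω(t)(iu)‖₁` and `b t = ‖U²_ω(t)u‖₂`, (A2) gives `a t ≤ ‖i‖ b t` and the cocycle
property with (A3) gives `b (t + 1) ≤ M a t`; after taking `log` and dividing by `t`, the constants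
and the unit time shift vanish in the limit. If `a` vanishes at some time, then `b` vanishes one
unit later and, by the cocycle property, from then on, so both quotients are eventually `0`
(as `Real.log 0 = 0`). -/

theorem tendsto_sub_const_atTop (c : ℝ) : Tendsto (fun t => t - c) atTop atTop :=
  tendsto_atTop_atTop.2 fun b => ⟨b + c, fun t ht => by linarith⟩

theorem tendsto_comp_sub_div_atTop {φ : ℝ → ℝ} {lam : ℝ} (c : ℝ)
    (h : Tendsto (fun t => φ t / t) atTop (𝓝 lam)) :
    Tendsto (fun t => φ (t - c) / t) atTop (𝓝 lam) := by
  have hshift : Tendsto (fun t => φ (t - c) / (t - c)) atTop (𝓝 lam) :=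
    h.comp (tendsto_sub_const_atTop c)
  have hratio : Tendsto (fun t : ℝ => 1 - c / t) atTop (𝓝 1) := by
    simpa using (tendsto_const_nhds (x := (1 : ℝ))).sub
      ((tendsto_const_nhds (x := c)).div_atTop tendsto_id)
  refine (by simpa using hshift.mul hratio : Tendsto _ atTop (𝓝 lam)).congr' ?_
  filter_upwards [eventually_gt_atTop 0, eventually_gt_atTop c] with t ht htc
  have : t - c ≠ 0 := by linarith
  field_simp

theorem tendsto_log_div_of_eventually_eq_zero {f : ℝ → ℝ} (hf : ∀ᶠ t in atTop, f t = 0) :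
    Tendsto (fun t => Real.log (f t) / t) atTop (𝓝 0) :=
  tendsto_const_nhds.congr' <| hf.mono fun t ht => by simp [ht]

theorem tendsto_log_div_of_le_of_le_comp_add {f g : ℝ → ℝ} {C D lam : ℝ}
    (hg : ∀ t, 0 ≤ g t) (hf : ∀ᶠ t in atTop, 0 < f t)
    (hfg : ∀ᶠ t in atTop, f t ≤ C * g t) (hgf : ∀ᶠ t in atTop, g (t + 1) ≤ D * f t)
    (h : Tendsto (fun t => Real.log (f t) / t) atTop (𝓝 lam)) :
    Tendsto (fun t => Real.log (g t) / t) atTop (𝓝 lam) := by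
  have hgpos : ∀ᶠ t in atTop, 0 < g t := by
    filter_upwards [hf, hfg] with t hft hfgt
    have hCg : 0 < C * g t := hft.trans_le hfgt
    exact pos_of_mul_pos_right hCg (pos_of_mul_pos_left hCg (hg t)).le
  have hlower : ∀ᶠ t in atTop, Real.log (f t) / t - Real.log C / t ≤ Real.log (g t) / t := by
    filter_upwards [hf, hfg, hgpos, eventually_gt_atTop 0] with t hft hfgt hgt ht
    have hC : 0 < C := pos_of_mul_pos_left (hft.trans_le hfgt) hgt.le
    rw [← sub_div]
    gcongr
    rw [sub_le_iff_le_add', ← Real.log_mul hC.ne' hgt.ne']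
    exact Real.log_le_log hft hfgt
  have hupper : ∀ᶠ t in atTop,
      Real.log (g t) / t ≤ Real.log D / t + Real.log (f (t - 1)) / t := by
    have hshift := tendsto_sub_const_atTop 1
    filter_upwards [hshift.eventually hf, hshift.eventually hgf, hgpos, eventually_gt_atTop 0]
      with t hft hgft hgt ht
    rw [sub_add_cancel] at hgft
    have hD : 0 < D := pos_of_mul_pos_left (hgt.trans_le hgft) hft.le
    rw [← add_div]
    gcongr
    rw [← Real.log_mul hD.ne' hft.ne']
    exact Real.log_le_log hgt hgft
  refine tendsto_of_tendsto_of_tendsto_of_le_of_le' ?_ ?_ hlower hupper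
  · simpa using h.sub ((tendsto_const_nhds (x := Real.log C)).div_atTop tendsto_id)
  · simpa using ((tendsto_const_nhds (x := Real.log D)).div_atTop tendsto_id).add
      (tendsto_comp_sub_div_atTop 1 h)

theorem ContinuousLinearMap.cocycle_apply_eq_zero_of_le {R X Ω : Type*} [Semiring R]
    [TopologicalSpace X] [AddCommMonoid X] [Module R X] (θ : ℝ → Ω → Ω) (U : Ω → ℝ → X →L[R] X)
    (hUc : ∀ ω t s, 0 ≤ t → 0 ≤ s → (U (θ s ω) t).comp (U ω s) = U ω (t + s))
    {ω : Ω} {s t : ℝ} {v : X} (hs : 0 ≤ s) (hst : s ≤ t) (hv : U ω s v = 0) : U ω t v = 0 := by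
  have := congr($(hUc ω (t - s) s (sub_nonneg.2 hst) hs) v)
  rwa [sub_add_cancel, ContinuousLinearMap.comp_apply, hv, map_zero, eq_comm] at this

theorem stmt_13_general
    {X₁ : Type*} [NormedAddCommGroup X₁] [NormedSpace ℝ X₁]
    {X₂ : Type*} [NormedAddCommGroup X₂] [NormedSpace ℝ X₂]
    (i : X₂ →L[ℝ] X₁)
    {Ω : Type*} (θ : ℝ → Ω → Ω)
    (U₁ : Ω → ℝ → (X₁ →L[ℝ] X₁)) (U₂ : Ω → ℝ → (X₂ →L[ℝ] X₂))
    (hU₂c : ∀ ω t s, 0 ≤ t → 0 ≤ s → (U₂ (θ s ω) t).comp (U₂ ω s) = U₂ ω (t + s))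
    (hA2 : ∀ ω t, 0 ≤ t → (U₁ ω t).comp i = i.comp (U₂ ω t))
    (U₁₂ : Ω → (X₁ →L[ℝ] X₂))
    (hA3₂ : ∀ ω, U₂ ω 1 = (U₁₂ ω).comp i)
    (M : ℝ) (hMb : ∀ ω, ‖U₁₂ ω‖ ≤ M)
    (ω : Ω) (u : X₂) (lam : ℝ)
    (h : Tendsto (fun t : ℝ => Real.log ‖U₁ ω t (i u)‖ / t) atTop (𝓝 lam)) :
    Tendsto (fun t : ℝ => Real.log ‖U₂ ω t u‖ / t) atTop (𝓝 lam) := by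
  have hrel : ∀ t, 0 ≤ t → i (U₂ ω t u) = U₁ ω t (i u) := fun t ht => congr($(hA2 ω t ht) u).symm
  have hstep : ∀ t, 0 ≤ t → U₂ ω (t + 1) u = U₁₂ (θ t ω) (U₁ ω t (i u)) := fun t ht => by
    rw [add_comm, ← hU₂c ω 1 t zero_le_one ht, ContinuousLinearMap.comp_apply, hA3₂,
      ContinuousLinearMap.comp_apply, hrel t ht]
  by_cases hvan : ∃ t₀, 0 ≤ t₀ ∧ U₁ ω t₀ (i u) = 0
  · obtain ⟨t₀, ht₀, hz⟩ := hvan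
    have hU₂ : ∀ᶠ t in atTop, U₂ ω t u = 0 := by
      filter_upwards [eventually_ge_atTop (t₀ + 1)] with t ht
      exact ContinuousLinearMap.cocycle_apply_eq_zero_of_le θ U₂ hU₂c (by linarith) ht
        (by rw [hstep t₀ ht₀, hz, map_zero])
    have hU₁ : ∀ᶠ t in atTop, U₁ ω t (i u) = 0 := by
      filter_upwards [hU₂, eventually_ge_atTop 0] with t ht ht0
      rw [← hrel t ht0, ht, map_zero]
    have hlam : lam = 0 := tendsto_nhds_unique h <|
      tendsto_log_div_of_eventually_eq_zero <| hU₁.mono fun t ht => by rw [ht, norm_zero]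
    exact hlam ▸ tendsto_log_div_of_eventually_eq_zero (hU₂.mono fun t ht => by rw [ht, norm_zero])
  · push Not at hvan
    refine tendsto_log_div_of_le_of_le_comp_add (C := ‖i‖) (D := M) (fun t => norm_nonneg _)
      ?_ ?_ ?_ h <;> filter_upwards [eventually_ge_atTop 0] with t ht
    · exact norm_pos_iff.2 (hvan t ht)
    · exact hrel t ht ▸ i.le_opNorm _
    · exact hstep t ht ▸ (U₁₂ _).le_of_opNorm_le (hMb _) _

/-- if `(1/t) ln‖U¹_ω(t)(iu)‖₁ → λ` as `t → ∞`, then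
`(1/t) ln‖U²_ω(t)u‖₂ → λ` as `t → ∞`, for nonzero `u ∈ X₂`. -/
theorem stmt_13
    {X₁ : Type*} [NormedAddCommGroup X₁] [NormedSpace ℝ X₁]
    {X₂ : Type*} [NormedAddCommGroup X₂] [NormedSpace ℝ X₂]
    (i : X₂ →L[ℝ] X₁) (hi : Function.Injective i)
    {Ω : Type*} (θ : ℝ → Ω → Ω)
    (hθ0 : ∀ ω, θ 0 ω = ω) (hθadd : ∀ t s ω, θ (t + s) ω = θ t (θ s ω))
    (U₁ : Ω → ℝ → (X₁ →L[ℝ] X₁)) (U₂ : Ω → ℝ → (X₂ →L[ℝ] X₂))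
    (hU₁0 : ∀ ω, U₁ ω 0 = ContinuousLinearMap.id ℝ X₁)
    (hU₂0 : ∀ ω, U₂ ω 0 = ContinuousLinearMap.id ℝ X₂)
    (hU₁c : ∀ ω t s, 0 ≤ t → 0 ≤ s → (U₁ (θ s ω) t).comp (U₁ ω s) = U₁ ω (t + s))
    (hU₂c : ∀ ω t s, 0 ≤ t → 0 ≤ s → (U₂ (θ s ω) t).comp (U₂ ω s) = U₂ ω (t + s))
    (hA2 : ∀ ω t, 0 ≤ t → (U₁ ω t).comp i = i.comp (U₂ ω t))
    (U₁₂ : Ω → (X₁ →L[ℝ] X₂))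
    (hA3₁ : ∀ ω, U₁ ω 1 = i.comp (U₁₂ ω))
    (hA3₂ : ∀ ω, U₂ ω 1 = (U₁₂ ω).comp i)
    (M : ℝ) (hM : 0 < M) (hMb : ∀ ω, ‖U₁₂ ω‖ ≤ M)
    (ω : Ω) (u : X₂) (hu : u ≠ 0) (lam : ℝ)
    (h : Tendsto (fun t : ℝ => Real.log ‖U₁ ω t (i u)‖ / t) atTop (𝓝 lam)) :
    Tendsto (fun t : ℝ => Real.log ‖U₂ ω t u‖ / t) atTop (𝓝 lam) :=
  stmt_13_general i θ U₁ U₂ hU₂c hA2 U₁₂ hA3₂ M hMb ω u lam h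
end

section
/- Let ω ∈ Ω, u ∈ X₂ and λ ∈ ℝ. Let ũ² : (−∞,0] → X₂ satisfy ũ²(0) = u and ũ²(s+t) = U^{(2)}_{θ_sω}(t)ũ²(s) for all s ≤ 0 and t ≥ 0 with s+t ≤ 0 (a negative semiorbit of Φ² through (ω,u)), and suppose lim_{s→−∞} (1/s) ln‖ũ²(s)‖₂ = λ. Then ũ¹ := i ∘ ũ² : (−∞,0] → X₁ satisfies ũ¹(0) = iu and ũ¹(s+t) = U^{(1)}_{θ_sω}(t)ũ¹(s) for all s ≤ 0, t ≥ 0 with s+t ≤ 0 (a negative semiorbit of Φ¹ through (ω,iu)), and lim_{s→−∞} (1/s) ln‖ũ¹(s)‖₁ = λ. -/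
open Filter Topology

/-- a negative semiorbit `ũ²` of `Φ²` through `(ω,u)` with Lyapunov exponent `λ`
at `-∞` pushes forward under `i` to a negative semiorbit `ũ¹ = i ∘ ũ²` of `Φ¹` through
`(ω, iu)` with the same exponent. -/
theorem stmt_14
    {X₁ : Type*} [NormedAddCommGroup X₁] [NormedSpace ℝ X₁]
    {X₂ : Type*} [NormedAddCommGroup X₂] [NormedSpace ℝ X₂]
    (i : X₂ →L[ℝ] X₁) (hi : Function.Injective i)
    {Ω : Type*} (θ : ℝ → Ω → Ω)
    (hθ0 : ∀ ω, θ 0 ω = ω) (hθadd : ∀ t s ω, θ (t + s) ω = θ t (θ s ω))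
    (U₁ : Ω → ℝ → (X₁ →L[ℝ] X₁)) (U₂ : Ω → ℝ → (X₂ →L[ℝ] X₂))
    (hU₁0 : ∀ ω, U₁ ω 0 = ContinuousLinearMap.id ℝ X₁)
    (hU₂0 : ∀ ω, U₂ ω 0 = ContinuousLinearMap.id ℝ X₂)
    (hU₁c : ∀ ω t s, 0 ≤ t → 0 ≤ s → (U₁ (θ s ω) t).comp (U₁ ω s) = U₁ ω (t + s))
    (hU₂c : ∀ ω t s, 0 ≤ t → 0 ≤ s → (U₂ (θ s ω) t).comp (U₂ ω s) = U₂ ω (t + s))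
    (hA2 : ∀ ω t, 0 ≤ t → (U₁ ω t).comp i = i.comp (U₂ ω t))
    (U₁₂ : Ω → (X₁ →L[ℝ] X₂))
    (hA3₁ : ∀ ω, U₁ ω 1 = i.comp (U₁₂ ω))
    (hA3₂ : ∀ ω, U₂ ω 1 = (U₁₂ ω).comp i)
    (M : ℝ) (hM : 0 < M) (hMb : ∀ ω, ‖U₁₂ ω‖ ≤ M)
    (ω : Ω) (u : X₂) (lam : ℝ)
    (u₂ : ℝ → X₂)
    (hu₂0 : u₂ 0 = u)
    (hu₂orb : ∀ s ≤ (0:ℝ), ∀ t, 0 ≤ t → s + t ≤ 0 → u₂ (s + t) = U₂ (θ s ω) t (u₂ s))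
    (hu₂lim : Tendsto (fun s : ℝ => Real.log ‖u₂ s‖ / s) atBot (𝓝 lam)) :
    (i ∘ u₂) 0 = i u ∧
      (∀ s ≤ (0:ℝ), ∀ t, 0 ≤ t → s + t ≤ 0 → (i ∘ u₂) (s + t) = U₁ (θ s ω) t ((i ∘ u₂) s)) ∧
      Tendsto (fun s : ℝ => Real.log ‖(i ∘ u₂) s‖ / s) atBot (𝓝 lam) := by
  have horb : ∀ s ≤ (0:ℝ), ∀ t, 0 ≤ t → s + t ≤ 0 →
      (i ∘ u₂) (s + t) = U₁ (θ s ω) t ((i ∘ u₂) s) := by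
    intro s hs t ht hst
    have h2 := hu₂orb s hs t ht hst
    have hA := congrArg (fun (T : X₂ →L[ℝ] X₁) => T (u₂ s)) (hA2 (θ s ω) t ht)
    simp only [ContinuousLinearMap.comp_apply, ContinuousLinearMap.coe_comp',
      Function.comp_apply] at hA ⊢
    rw [h2, ← hA]
  refine ⟨by simp [hu₂0], horb, ?_⟩
  by_cases hzero : ∀ s ≤ (0:ℝ), u₂ s = 0
  · have h0 : (fun s : ℝ => Real.log ‖u₂ s‖ / s) =ᶠ[atBot] fun _ => 0 := by
      filter_upwards [eventually_le_atBot (0:ℝ)] with s hs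
      simp [hzero s hs]
    have hlam : lam = 0 := tendsto_nhds_unique (hu₂lim.congr' h0) tendsto_const_nhds
    have h1 : (fun s : ℝ => Real.log ‖(i ∘ u₂) s‖ / s) =ᶠ[atBot] fun _ => (0:ℝ) := by
      filter_upwards [eventually_le_atBot (0:ℝ)] with s hs
      simp [hzero s hs]
    rw [hlam]
    exact Tendsto.congr' h1.symm tendsto_const_nhds
  · push_neg at hzero
    obtain ⟨s1, hs1, hne⟩ := hzero
    have hne' : ∀ s ≤ s1, u₂ s ≠ 0 := by
      intro s hs hcon
      apply hne
      have h := hu₂orb s (hs.trans hs1) (s1 - s) (by linarith) (by linarith)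
      rw [hcon] at h
      simpa using h
    have hinorm : 0 < ‖i‖ := by
      have h1 : i (u₂ s1) ≠ 0 := fun h => hne (hi (by simpa using h))
      have hi0 : i ≠ 0 := fun h => h1 (by simp [h])
      exact norm_pos_iff.mpr hi0
    -- lower bound limit
    have hinv : Tendsto (fun s : ℝ => s⁻¹) atBot (𝓝 0) := by
      have h0 : Tendsto (fun s : ℝ => (-s)⁻¹) atBot (𝓝 0) :=
        tendsto_inv_atTop_zero.comp tendsto_neg_atBot_atTop
      have h1 : Tendsto (fun s : ℝ => -(-s)⁻¹) atBot (𝓝 (-0)) := h0.neg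
      rw [neg_zero] at h1
      refine h1.congr fun s => ?_
      rw [inv_neg, neg_neg]
    have hconst : ∀ c : ℝ, Tendsto (fun s : ℝ => c / s) atBot (𝓝 0) := by
      intro c
      simpa [div_eq_mul_inv] using hinv.const_mul c
    have hLlim : Tendsto (fun s : ℝ => Real.log ‖i‖ / s + Real.log ‖u₂ s‖ / s)
        atBot (𝓝 lam) := by
      simpa using (hconst (Real.log ‖i‖)).add hu₂lim
    -- upper bound limit
    have hshift : Tendsto (fun s : ℝ => Real.log ‖u₂ (s + 1)‖ / (s + 1)) atBot (𝓝 lam) :=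
      hu₂lim.comp (tendsto_atBot_add_const_right _ 1 tendsto_id)
    have hratio : Tendsto (fun s : ℝ => (s + 1) / s) atBot (𝓝 1) := by
      have h : Tendsto (fun s : ℝ => 1 + s⁻¹) atBot (𝓝 (1 + 0)) :=
        tendsto_const_nhds.add hinv
      refine Tendsto.congr' ?_ (by simpa using h)
      filter_upwards [eventually_lt_atBot (0:ℝ)] with s hs
      rw [add_div, div_self hs.ne, one_div]
    have hshift' : Tendsto (fun s : ℝ => Real.log ‖u₂ (s + 1)‖ / s) atBot (𝓝 lam) := by
      have h := hshift.mul hratio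
      rw [mul_one] at h
      refine Tendsto.congr' ?_ h
      filter_upwards [eventually_lt_atBot (-1:ℝ)] with s hs
      have h1 : s + 1 ≠ 0 := by linarith
      field_simp
    have hUlim : Tendsto (fun s : ℝ => Real.log ‖u₂ (s + 1)‖ / s - Real.log M / s)
        atBot (𝓝 lam) := by
      simpa using hshift'.sub (hconst (Real.log M))
    refine tendsto_of_tendsto_of_tendsto_of_le_of_le' hLlim hUlim ?_ ?_
    · -- lower: log‖i‖/s + log‖u₂ s‖/s ≤ log‖i (u₂ s)‖/s
      filter_upwards [eventually_le_atBot (min (s1 - 1) (-1))] with s hs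
      have hs1' : s ≤ s1 := le_trans hs (le_trans (min_le_left _ _) (by linarith))
      have hsneg : s < 0 := lt_of_le_of_lt (le_trans hs (min_le_right _ _)) (by norm_num)
      have hx : u₂ s ≠ 0 := hne' s hs1'
      have hix : i (u₂ s) ≠ 0 := fun h => hx (hi (by simpa using h))
      have hlog : Real.log ‖i (u₂ s)‖ ≤ Real.log ‖i‖ + Real.log ‖u₂ s‖ := by
        rw [← Real.log_mul (ne_of_gt hinorm) (by simpa using hx)]
        exact Real.log_le_log (norm_pos_iff.mpr hix) (i.le_opNorm _)
      have := div_le_div_of_nonpos_of_le (le_of_lt hsneg) hlog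
      calc Real.log ‖i‖ / s + Real.log ‖u₂ s‖ / s
          = (Real.log ‖i‖ + Real.log ‖u₂ s‖) / s := by ring
        _ ≤ Real.log ‖i (u₂ s)‖ / s := this
        _ = Real.log ‖(i ∘ u₂) s‖ / s := rfl
    · -- upper: log‖i (u₂ s)‖/s ≤ log‖u₂ (s+1)‖/s - log M /s
      filter_upwards [eventually_le_atBot (min (s1 - 1) (-1))] with s hs
      have hs1' : s + 1 ≤ s1 := by
        have := le_trans hs (min_le_left _ _); linarith
      have hsneg : s < 0 := lt_of_le_of_lt (le_trans hs (min_le_right _ _)) (by norm_num)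
      have hs0 : s ≤ 0 := le_of_lt hsneg
      have hx1 : u₂ (s + 1) ≠ 0 := hne' _ hs1'
      have heq : u₂ (s + 1) = U₁₂ (θ s ω) (i (u₂ s)) := by
        have h := hu₂orb s hs0 1 (by norm_num) (by
          have := le_trans hs (min_le_right _ _); linarith)
        rw [h, hA3₂]
        rfl
      have hb : ‖u₂ (s + 1)‖ ≤ M * ‖i (u₂ s)‖ := by
        rw [heq]
        exact le_trans ((U₁₂ (θ s ω)).le_opNorm _)
          (mul_le_mul_of_nonneg_right (hMb _) (norm_nonneg _))
      have hlog : Real.log ‖u₂ (s + 1)‖ ≤ Real.log M + Real.log ‖i (u₂ s)‖ := by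
        rw [← Real.log_mul (ne_of_gt hM) (by
          have hix : i (u₂ s) ≠ 0 := by
            intro h
            apply hx1
            rw [heq, h]; simp
          simpa using hix)]
        exact Real.log_le_log (norm_pos_iff.mpr (by simpa using hx1)) hb
      show Real.log ‖i (u₂ s)‖ / s ≤ _
      have h2 : Real.log ‖u₂ (s + 1)‖ / s - Real.log M / s
          = (Real.log ‖u₂ (s + 1)‖ - Real.log M) / s := by ring
      rw [h2]
      exact div_le_div_of_nonpos_of_le hsneg.le (by linarith)
end

section
/- Let ω ∈ Ω, u ∈ X₂ and λ ∈ ℝ. Let ũ¹ : (−∞,0] → X₁ satisfy ũ¹(0) = iu and ũ¹(s+t) = U^{(1)}_{θ_sω}(t)ũ¹(s) for all s ≤ 0 and t ≥ 0 with s+t ≤ 0 (a negative semiorbit of Φ¹ through (ω,iu)), and suppose lim_{s→−∞} (1/s) ln‖ũ¹(s)‖₁ = λ. Define ũ²(s) := U^{(1,2)}_{θ_{s−1}ω}(1) ũ¹(s−1) for s ≤ 0. Then ũ²(0) = u, ũ²(s+t) = U^{(2)}_{θ_sω}(t)ũ²(s) for all s ≤ 0 and t ≥ 0 with s+t ≤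 0 (a negative semiorbit of Φ² through (ω,u)), and lim_{s→−∞} (1/s) ln‖ũ²(s)‖₂ = λ. -/
open Filter Topology

/-- a negative semiorbit `ũ¹` of `Φ¹` through `(ω, iu)` with Lyapunov exponent
`λ` at `-∞` yields a negative semiorbit `ũ²(s) := U¹²_{θ_{s−1}ω}(1) ũ¹(s−1)` of `Φ²` through
`(ω, u)` with the same exponent. -/
theorem stmt_15
    {X₁ : Type*} [NormedAddCommGroup X₁] [NormedSpace ℝ X₁]
    {X₂ : Type*} [NormedAddCommGroup X₂] [NormedSpace ℝ X₂]
    (i : X₂ →L[ℝ] X₁) (hi : Function.Injective i)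
    {Ω : Type*} (θ : ℝ → Ω → Ω)
    (hθ0 : ∀ ω, θ 0 ω = ω) (hθadd : ∀ t s ω, θ (t + s) ω = θ t (θ s ω))
    (U₁ : Ω → ℝ → (X₁ →L[ℝ] X₁)) (U₂ : Ω → ℝ → (X₂ →L[ℝ] X₂))
    (hU₁0 : ∀ ω, U₁ ω 0 = ContinuousLinearMap.id ℝ X₁)
    (hU₂0 : ∀ ω, U₂ ω 0 = ContinuousLinearMap.id ℝ X₂)
    (hU₁c : ∀ ω t s, 0 ≤ t → 0 ≤ s → (U₁ (θ s ω) t).comp (U₁ ω s) = U₁ ω (t + s))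
    (hU₂c : ∀ ω t s, 0 ≤ t → 0 ≤ s → (U₂ (θ s ω) t).comp (U₂ ω s) = U₂ ω (t + s))
    (hA2 : ∀ ω t, 0 ≤ t → (U₁ ω t).comp i = i.comp (U₂ ω t))
    (U₁₂ : Ω → (X₁ →L[ℝ] X₂))
    (hA3₁ : ∀ ω, U₁ ω 1 = i.comp (U₁₂ ω))
    (hA3₂ : ∀ ω, U₂ ω 1 = (U₁₂ ω).comp i)
    (M : ℝ) (hM : 0 < M) (hMb : ∀ ω, ‖U₁₂ ω‖ ≤ M)
    (ω : Ω) (u : X₂) (lam : ℝ)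
    (u₁ : ℝ → X₁)
    (hu₁0 : u₁ 0 = i u)
    (hu₁orb : ∀ s ≤ (0:ℝ), ∀ t, 0 ≤ t → s + t ≤ 0 → u₁ (s + t) = U₁ (θ s ω) t (u₁ s))
    (hu₁lim : Tendsto (fun s : ℝ => Real.log ‖u₁ s‖ / s) atBot (𝓝 lam))
    (u₂ : ℝ → X₂)
    (hu₂def : ∀ s : ℝ, u₂ s = U₁₂ (θ (s - 1) ω) (u₁ (s - 1))) :
    u₂ 0 = u ∧
      (∀ s ≤ (0:ℝ), ∀ t, 0 ≤ t → s + t ≤ 0 → u₂ (s + t) = U₂ (θ s ω) t (u₂ s)) ∧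
      Tendsto (fun s : ℝ => Real.log ‖u₂ s‖ / s) atBot (𝓝 lam) := by

  -- key identity: for s ≤ 0, i (u₂ s) = u₁ s
  have key : ∀ s ≤ (0:ℝ), i (u₂ s) = u₁ s := by
    intro s hs
    have h1 := hu₁orb (s - 1) (by linarith) 1 (by norm_num) (by linarith)
    rw [show s - 1 + 1 = s by ring] at h1
    rw [hu₂def s, h1, hA3₁]
    rfl
  have h0 : u₂ 0 = u := by
    apply hi
    rw [key 0 le_rfl, hu₁0]
  have horb : ∀ s ≤ (0:ℝ), ∀ t, 0 ≤ t → s + t ≤ 0 →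
      u₂ (s + t) = U₂ (θ s ω) t (u₂ s) := by
    intro s hs t ht hst
    apply hi
    have hcomp := ContinuousLinearMap.ext_iff.mp (hA2 (θ s ω) t ht) (u₂ s)
    simp only [ContinuousLinearMap.comp_apply] at hcomp
    rw [key (s + t) hst, hu₁orb s hs t ht hst, ← key s hs, hcomp]
  refine ⟨h0, horb, ?_⟩
  -- zero propagation
  have zprop : ∀ s₁ ≤ (0:ℝ), u₁ s₁ = 0 → ∀ s, s₁ ≤ s → s ≤ 0 → u₁ s = 0 := by
    intro s₁ hs₁ hz s hle hs
    have h := hu₁orb s₁ hs₁ (s - s₁) (by linarith) (by linarith)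
    rw [show s₁ + (s - s₁) = s by ring] at h
    rw [h, hz, map_zero]
  by_cases hB : ∃ S ≤ (0:ℝ), ∀ s ≤ S, u₁ s ≠ 0
  · obtain ⟨S, hS0, hSne⟩ := hB
    -- ‖i‖ > 0
    have hine : i (u₂ S) ≠ 0 := by rw [key S hS0]; exact hSne S le_rfl
    have hi0 : i ≠ 0 := by
      intro h; rw [h] at hine; exact hine rfl
    have hipos : (0:ℝ) < ‖i‖ := norm_pos_iff.mpr hi0
    have hu₂ne : ∀ s ≤ S, u₂ s ≠ 0 := by
      intro s hsS h
      have := key s (le_trans hsS hS0)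
      rw [h, map_zero] at this
      exact hSne s hsS this.symm
    -- auxiliary limits
    have Tsub : Tendsto (fun s : ℝ => s - 1) atBot atBot :=
      tendsto_atBot_add_const_right atBot (-1) tendsto_id |>.congr
        (fun s => by simp [sub_eq_add_neg])
    have Tinv : Tendsto (fun s : ℝ => s⁻¹) atBot (𝓝 0) := by
      have h := (tendsto_inv_atTop_zero.comp tendsto_neg_atBot_atTop (α := ℝ)).neg
      rw [neg_zero] at h
      exact h.congr (fun s => by simp [inv_neg])
    have T1 : Tendsto (fun s : ℝ => Real.log ‖u₁ (s - 1)‖ / (s - 1)) atBot (𝓝 lam) :=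
      hu₁lim.comp Tsub
    have T2 : Tendsto (fun s : ℝ => (s - 1) / s) atBot (𝓝 1) := by
      have : Tendsto (fun s : ℝ => 1 - s⁻¹) atBot (𝓝 (1 - 0)) :=
        tendsto_const_nhds.sub Tinv
      rw [sub_zero] at this
      refine this.congr' ?_
      filter_upwards [eventually_le_atBot (-1 : ℝ)] with s hs
      have hs0 : s ≠ 0 := by intro h; rw [h] at hs; norm_num at hs
      field_simp
    have T3 : ∀ c : ℝ, Tendsto (fun s : ℝ => c / s) atBot (𝓝 0) := by
      intro c
      have : Tendsto (fun s : ℝ => c * s⁻¹) atBot (𝓝 (c * 0)) :=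
        Tinv.const_mul c
      rw [mul_zero] at this
      exact this.congr (by intro s; rw [div_eq_mul_inv])
    -- lower bound function
    have Tg : Tendsto (fun s : ℝ => (Real.log M + Real.log ‖u₁ (s - 1)‖) / s)
        atBot (𝓝 lam) := by
      have h := (T3 (Real.log M)).add (T1.mul T2)
      rw [zero_add, mul_one] at h
      refine h.congr' ?_
      filter_upwards [eventually_le_atBot (-1 : ℝ)] with s hs
      have hs0 : s ≠ 0 := by intro h; rw [h] at hs; norm_num at hs
      have hs1 : s - 1 ≠ 0 := by intro h; rw [sub_eq_zero] at h; linarith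
      field_simp
    -- upper bound function
    have Th : Tendsto (fun s : ℝ => Real.log ‖u₁ s‖ / s - Real.log ‖i‖ / s)
        atBot (𝓝 lam) := by
      have h := hu₁lim.sub (T3 (Real.log ‖i‖))
      rwa [sub_zero] at h
    refine tendsto_of_tendsto_of_tendsto_of_le_of_le' Tg Th ?_ ?_
    · -- g ≤ f eventually
      filter_upwards [eventually_le_atBot (min S (-1) : ℝ)] with s hs
      have hsS : s ≤ S := le_trans hs (min_le_left _ _)
      have hsneg : s ≤ -1 := le_trans hs (min_le_right _ _)
      have hs0 : s < 0 := by linarith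
      have hp2 : (0:ℝ) < ‖u₂ s‖ := norm_pos_iff.mpr (hu₂ne s hsS)
      have hp1 : (0:ℝ) < ‖u₁ (s - 1)‖ := norm_pos_iff.mpr (hSne (s - 1) (by linarith))
      have hb : ‖u₂ s‖ ≤ M * ‖u₁ (s - 1)‖ := by
        rw [hu₂def s]
        calc ‖U₁₂ (θ (s - 1) ω) (u₁ (s - 1))‖ ≤ ‖U₁₂ (θ (s - 1) ω)‖ * ‖u₁ (s - 1)‖ :=
              (U₁₂ (θ (s - 1) ω)).le_opNorm _
          _ ≤ M * ‖u₁ (s - 1)‖ :=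
              mul_le_mul_of_nonneg_right (hMb _) (norm_nonneg _)
      have hlog : Real.log ‖u₂ s‖ ≤ Real.log M + Real.log ‖u₁ (s - 1)‖ := by
        rw [← Real.log_mul (ne_of_gt hM) (ne_of_gt hp1)]
        exact Real.log_le_log hp2 hb
      rw [div_eq_mul_inv, div_eq_mul_inv]
      exact mul_le_mul_of_nonpos_right hlog (inv_nonpos.mpr hs0.le)
    · -- f ≤ h eventually
      filter_upwards [eventually_le_atBot (min S (-1) : ℝ)] with s hs
      have hsS : s ≤ S := le_trans hs (min_le_left _ _)
      have hsneg : s ≤ -1 := le_trans hs (min_le_right _ _)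
      have hs0 : s < 0 := by linarith
      have hp2 : (0:ℝ) < ‖u₂ s‖ := norm_pos_iff.mpr (hu₂ne s hsS)
      have hp1 : (0:ℝ) < ‖u₁ s‖ := norm_pos_iff.mpr (hSne s hsS)
      have hb : ‖u₁ s‖ ≤ ‖i‖ * ‖u₂ s‖ := by
        rw [← key s (le_trans hsS hS0)]
        exact i.le_opNorm _
      have hlog : Real.log ‖u₁ s‖ - Real.log ‖i‖ ≤ Real.log ‖u₂ s‖ := by
        have : Real.log ‖u₁ s‖ ≤ Real.log ‖i‖ + Real.log ‖u₂ s‖ := by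
          rw [← Real.log_mul (ne_of_gt hipos) (ne_of_gt hp2)]
          exact Real.log_le_log hp1 hb
        linarith
      rw [← sub_div, div_eq_mul_inv, div_eq_mul_inv]
      exact mul_le_mul_of_nonpos_right hlog (inv_nonpos.mpr hs0.le)
  · -- degenerate case: u₁ vanishes on (-∞, 0]
    push_neg at hB
    have hz : ∀ s ≤ (0:ℝ), u₁ s = 0 := by
      intro s hs
      obtain ⟨s', hs', hz'⟩ := hB s hs
      exact zprop s' (le_trans hs' hs) hz' s hs' hs
    have hlam : lam = 0 := by
      have : Tendsto (fun s : ℝ => Real.log ‖u₁ s‖ / s) atBot (𝓝 0) := by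
        refine tendsto_const_nhds.congr' ?_
        filter_upwards [eventually_le_atBot (0 : ℝ)] with s hs
        rw [hz s hs, norm_zero, Real.log_zero, zero_div]
      exact tendsto_nhds_unique hu₁lim this
    rw [hlam]
    refine tendsto_const_nhds.congr' ?_
    filter_upwards [eventually_le_atBot (0 : ℝ)] with s hs
    rw [hu₂def s, hz (s - 1) (by linarith), map_zero, norm_zero, Real.log_zero, zero_div]
end
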